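/- Let d ≥ 1 be an integer, m, k ∈ ℤ^d with m ≠ 0, and let a be a real number with 0 < a < m²/2. Set s = m²/2 and t = k·m, and let M_m = [[s, it], [−it, s]]. Then the eigenvalues of the matrix product (M_m − diag(0, a))·(M_m − diag(a, 0)) are exactly (√(s(s − a)) + t)² and (√(s(s − a)) − t)²; in particular, this matrix has no negative real eigenvalue. -/

import Mathlib

/-!
With `r = √(s(s - a))`, which is real because `0 ≤ s` and `a < s`, the product equals
`[[r² + t², 2ist], [-2i(s - a)t, r² + t²]]`. Its determinant is `(r² + t²)² - 4r²t² = (r² - t²)²`,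
so the characteristic polynomial factors as `(λ - (r + t)²)(λ - (r - t)²)`. Both eigenvalues are
squares of reals, hence never negative.
-/

/-- `lam` is an eigenvalue of the complex 2×2 matrix `A`. -/
def IsEigenvalue (A : Matrix (Fin 2) (Fin 2) ℂ) (lam : ℂ) : Prop :=
  ∃ v : Fin 2 → ℂ, v ≠ 0 ∧ A.mulVec v = lam • v

/-- The Hermitian Fourier block `M_m = [[m²/2, i(k·m)], [−i(k·m), m²/2]]`. -/
noncomputable def Mmat (d : ℕ) (m k : Fin d → ℤ) : Matrix (Fin 2) (Fin 2) ℂ :=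
  !![((∑ j, (m j) ^ 2 : ℤ) : ℂ) / 2, Complex.I * ((∑ j, k j * m j : ℤ) : ℂ);
     -Complex.I * ((∑ j, k j * m j : ℤ) : ℂ), ((∑ j, (m j) ^ 2 : ℤ) : ℂ) / 2]

open Matrix Complex

lemma isEigenvalue_iff_det_sub_smul_one_eq_zero (A : Matrix (Fin 2) (Fin 2) ℂ) (lam : ℂ) :
    IsEigenvalue A lam ↔ (A - lam • 1).det = 0 := by
  simp only [IsEigenvalue, ← exists_mulVec_eq_zero_iff, sub_mulVec, smul_mulVec, one_mulVec,
    sub_eq_zero]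

lemma sub_diagonal_fin_two {R : Type*} [AddGroup R] (p q r u x y : R) :
    !![p, q; r, u] - diagonal ![x, y] = !![p - x, q; r, u - y] := by
  ext i j; fin_cases i <;> fin_cases j <;> simp

lemma sub_smul_one_fin_two {R : Type*} [Ring R] (p q r u x : R) :
    !![p, q; r, u] - x • 1 = !![p - x, q; r, u - x] := by
  ext i j; fin_cases i <;> fin_cases j <;> simp

lemma mul_sub_diagonal_eq (s t a : ℂ) :
    (!![s, I * t; -I * t, s] - diagonal ![0, a]) * (!![s, I * t; -I * t, s] - diagonal ![a, 0]) =
      !![s * (s - a) + t ^ 2, 2 * I * s * t; -2 * I * (s - a) * t, s * (s - a) + t ^ 2] := by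
  rw [sub_diagonal_fin_two, sub_diagonal_fin_two, sub_zero, mul_fin_two]
  simp only [EmbeddingLike.apply_eq_iff_eq, vecCons_inj, and_true]
  refine ⟨⟨?_, by ring⟩, by ring, ?_⟩ <;> linear_combination -t ^ 2 * I_sq

lemma det_mul_sub_diagonal_sub_smul_one (s t a r lam : ℂ) (hr : r ^ 2 = s * (s - a)) :
    ((!![s, I * t; -I * t, s] - diagonal ![0, a]) *
        (!![s, I * t; -I * t, s] - diagonal ![a, 0]) - lam • 1).det =
      ((r + t) ^ 2 - lam) * ((r - t) ^ 2 - lam) := by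
  rw [mul_sub_diagonal_eq, sub_smul_one_fin_two, det_fin_two_of]
  linear_combination (2 * t ^ 2 + 2 * lam - s * (s - a) - r ^ 2) * hr +
    4 * s * (s - a) * t ^ 2 * I_sq

lemma isEigenvalue_mul_sub_diagonal_iff (s t a r lam : ℂ) (hr : r ^ 2 = s * (s - a)) :
    IsEigenvalue ((!![s, I * t; -I * t, s] - diagonal ![0, a]) *
        (!![s, I * t; -I * t, s] - diagonal ![a, 0])) lam ↔
      lam = (r + t) ^ 2 ∨ lam = (r - t) ^ 2 := by
  rw [isEigenvalue_iff_det_sub_smul_one_eq_zero, det_mul_sub_diagonal_sub_smul_one s t a r lam hr,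
    mul_eq_zero, sub_eq_zero, sub_eq_zero, eq_comm, @eq_comm _ _ lam]

lemma not_im_eq_zero_and_re_neg_ofReal_sq (x : ℝ) :
    ¬(((x : ℂ) ^ 2).im = 0 ∧ ((x : ℂ) ^ 2).re < 0) :=
  fun h => (sq_nonneg x).not_gt (by simpa [← ofReal_pow] using h.2)

theorem stmt12_general (d : ℕ) (m k : Fin d → ℤ)
    (a : ℝ) (ha : a < ((∑ j, (m j) ^ 2 : ℤ) : ℝ) / 2) :
    (∀ lam : ℂ,
        IsEigenvalue
          ((Mmat d m k - Matrix.diagonal ![0, (a : ℂ)]) *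
            (Mmat d m k - Matrix.diagonal ![(a : ℂ), 0])) lam ↔
          lam =
            ((Real.sqrt ((((∑ j, (m j) ^ 2 : ℤ) : ℝ) / 2) *
                  (((∑ j, (m j) ^ 2 : ℤ) : ℝ) / 2 - a))
              + ((∑ j, k j * m j : ℤ) : ℝ) : ℝ) : ℂ) ^ 2 ∨
          lam =
            ((Real.sqrt ((((∑ j, (m j) ^ 2 : ℤ) : ℝ) / 2) *
                  (((∑ j, (m j) ^ 2 : ℤ) : ℝ) / 2 - a))
              - ((∑ j, k j * m j : ℤ) : ℝ) : ℝ) : ℂ) ^ 2) ∧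
    (∀ lam : ℂ,
        IsEigenvalue
          ((Mmat d m k - Matrix.diagonal ![0, (a : ℂ)]) *
            (Mmat d m k - Matrix.diagonal ![(a : ℂ), 0])) lam →
        ¬(lam.im = 0 ∧ lam.re < 0)) := by
  set s : ℝ := ((∑ j, (m j) ^ 2 : ℤ) : ℝ) / 2
  set t : ℝ := ((∑ j, k j * m j : ℤ) : ℝ)
  set r : ℝ := Real.sqrt (s * (s - a))
  have hs : 0 ≤ s := by positivity
  have hr : (r : ℂ) ^ 2 = s * (s - a) := by
    exact_mod_cast Real.sq_sqrt (mul_nonneg hs (sub_nonneg.2 ha.le))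
  have hM : Mmat d m k = !![(s : ℂ), I * t; -I * t, s] := by simp [Mmat, s, t]
  have eigenvalue_iff : ∀ lam : ℂ, IsEigenvalue ((Mmat d m k - diagonal ![0, (a : ℂ)]) *
      (Mmat d m k - diagonal ![(a : ℂ), 0])) lam ↔
        lam = ((r + t : ℝ) : ℂ) ^ 2 ∨ lam = ((r - t : ℝ) : ℂ) ^ 2 := fun lam => by
    push_cast
    rw [hM]
    exact isEigenvalue_mul_sub_diagonal_iff s t a r lam hr
  refine ⟨eigenvalue_iff, fun lam hlam => ?_⟩
  rcases (eigenvalue_iff lam).1 hlam with rfl | rfl <;> exact not_im_eq_zero_and_re_neg_ofReal_sq _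

theorem stmt12 (d : ℕ) (hd : 1 ≤ d) (m k : Fin d → ℤ) (hm : m ≠ 0)
    (a : ℝ) (ha0 : 0 < a) (ha : a < ((∑ j, (m j) ^ 2 : ℤ) : ℝ) / 2) :
    (∀ lam : ℂ,
        IsEigenvalue
          ((Mmat d m k - Matrix.diagonal ![0, (a : ℂ)]) *
            (Mmat d m k - Matrix.diagonal ![(a : ℂ), 0])) lam ↔
          lam =
            ((Real.sqrt ((((∑ j, (m j) ^ 2 : ℤ) : ℝ) / 2) *
                  (((∑ j, (m j) ^ 2 : ℤ) : ℝ) / 2 - a))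
              + ((∑ j, k j * m j : ℤ) : ℝ) : ℝ) : ℂ) ^ 2 ∨
          lam =
            ((Real.sqrt ((((∑ j, (m j) ^ 2 : ℤ) : ℝ) / 2) *
                  (((∑ j, (m j) ^ 2 : ℤ) : ℝ) / 2 - a))
              - ((∑ j, k j * m j : ℤ) : ℝ) : ℝ) : ℂ) ^ 2) ∧
    (∀ lam : ℂ,
        IsEigenvalue
          ((Mmat d m k - Matrix.diagonal ![0, (a : ℂ)]) *
            (Mmat d m k - Matrix.diagonal ![(a : ℂ), 0])) lam →
        ¬(lam.im = 0 ∧ lam.re < 0)) :=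
  stmt12_general d m k a ha
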